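/- Define x(T) := 2(T−1)³/(1−T³). Let U ⊆ ℂ be open with T³ ≠ 1, T⁶ ≠ 1 and x(T)·(x(T)−1)·(x(T)+8) ≠ 0 for all T ∈ U, let V ⊆ ℂ be open with x(U) ⊆ V, let ψ solve ψ'' = Q₃·ψ on V, and let g : ℂ → ℂ be twice differentiable and nonvanishing on U with g(T)² = x'(T) for all T ∈ U. Then Φ(T) := ψ(x(T))/g(T) solves Φ''(T) = −9T⁴/(T⁶−1)²·Φ(T) on U. -/

import Mathlib

/-!
Write `Φ = ψ ∘ x / g` with `g² = x'`. Differentiating twice and using `ψ'' = Q ψ` gives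
`Φ'' = (Q(x) g⁴ - g''/g + 2 (g'/g)²) Φ`, and differentiating `g² = x'` twice turns the
`g`-terms into `-{x, T}/2`, so `Φ'' = (Q(x) x'² - {x, T}/2) Φ` with `{x, T}` the Schwarzian
derivative (the Liouville transformation). For `x = 2(T-1)³/(1-T³) = -2(T-1)²/(T²+T+1)` the new
potential `Q₃(x) x'² - {x, T}/2` is a rational function of `T` that simplifies to
`-9T⁴/(T⁶-1)²`.
-/

open Complex

/-- `f` solves the equation `ψ'' = Q·ψ` on the open set `U`. -/
def SolvesOn (Q f : ℂ → ℂ) (U : Set ℂ) : Prop :=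
  (∀ x ∈ U, DifferentiableAt ℂ f x) ∧ (∀ x ∈ U, DifferentiableAt ℂ (deriv f) x) ∧
    ∀ x ∈ U, deriv (deriv f) x = Q x * f x

/-- The coefficient of the normal form (3') of the third Chudnovsky equation. -/
noncomputable def Q₃ (x : ℂ) : ℂ :=
  -(1 / 4) * (x ^ 4 + 8 * x ^ 3 + 72 * x ^ 2 - 64 * x + 64)
    / (x ^ 2 * (x - 1) ^ 2 * (x + 8) ^ 2)

/-- The rational substitution of Example 2 of the paper. -/
noncomputable def xOfT (T : ℂ) : ℂ := 2 * (T - 1) ^ 3 / (1 - T ^ 3)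

open Filter Topology Set

noncomputable def schwarzian (f : ℂ → ℂ) (z : ℂ) : ℂ :=
  deriv (deriv (deriv f)) z / deriv f z - 3 / 2 * (deriv (deriv f) z / deriv f z) ^ 2

theorem SolvesOn.congr_potential {Q Q' f : ℂ → ℂ} {U : Set ℂ} (h : SolvesOn Q f U)
    (hQ : EqOn Q Q' U) : SolvesOn Q' f U :=
  ⟨h.1, h.2.1, fun z hz => by rw [h.2.2 z hz, hQ hz]⟩

section Liouville

variable {Q ψ x g : ℂ → ℂ} {T : ℂ}

lemma hasDerivAt_comp_div (hψ : DifferentiableAt ℂ ψ (x T)) (hx : HasDerivAt x (g T ^ 2) T)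
    (hg : DifferentiableAt ℂ g T) (hg0 : g T ≠ 0) :
    HasDerivAt (fun t => ψ (x t) / g t)
      (deriv ψ (x T) * g T - ψ (x T) * deriv g T / g T ^ 2) T := by
  refine ((hψ.hasDerivAt.comp T hx).div hg.hasDerivAt hg0).congr_deriv ?_
  simp only [Function.comp_apply]
  field_simp

lemma hasDerivAt_deriv_comp_div (hψ : DifferentiableAt ℂ ψ (x T))
    (hψ' : DifferentiableAt ℂ (deriv ψ) (x T)) (hx : HasDerivAt x (g T ^ 2) T)
    (hg : DifferentiableAt ℂ g T) (hg' : DifferentiableAt ℂ (deriv g) T) (hg0 : g T ≠ 0) :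
    HasDerivAt (fun t => deriv ψ (x t) * g t - ψ (x t) * deriv g t / g t ^ 2)
      (deriv (deriv ψ) (x T) * g T ^ 3 -
        ψ (x T) * (deriv (deriv g) T / g T ^ 2 - 2 * deriv g T ^ 2 / g T ^ 3)) T := by
  have hψx := hψ.hasDerivAt.comp T hx
  have hg2 := hg.hasDerivAt.fun_pow 2
  refine (((hψ'.hasDerivAt.comp T hx).fun_mul hg.hasDerivAt).fun_sub
    ((hψx.fun_mul hg'.hasDerivAt).div hg2 (pow_ne_zero 2 hg0))).congr_deriv ?_
  simp only [Function.comp_apply]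
  field_simp
  ring

theorem SolvesOn.comp_div {U V : Set ℂ} (hU : IsOpen U) (hψ : SolvesOn Q ψ V)
    (hxV : ∀ T ∈ U, x T ∈ V) (hg1 : ∀ T ∈ U, DifferentiableAt ℂ g T)
    (hg2 : ∀ T ∈ U, DifferentiableAt ℂ (deriv g) T) (hgne : ∀ T ∈ U, g T ≠ 0)
    (hgsq : ∀ T ∈ U, g T ^ 2 = deriv x T) :
    SolvesOn (fun T => Q (x T) * g T ^ 4 - deriv (deriv g) T / g T + 2 * (deriv g T / g T) ^ 2)
      (fun T => ψ (x T) / g T) U := by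
  obtain ⟨hψ1, hψ2, hψ3⟩ := hψ
  have hx : ∀ T ∈ U, HasDerivAt x (g T ^ 2) T := fun T hT => by
    rw [hgsq T hT]
    exact (differentiableAt_of_deriv_ne_zero (hgsq T hT ▸ pow_ne_zero 2 (hgne T hT))).hasDerivAt
  have hΦ' : ∀ T ∈ U, HasDerivAt (fun t => ψ (x t) / g t)
      (deriv ψ (x T) * g T - ψ (x T) * deriv g T / g T ^ 2) T := fun T hT =>
    hasDerivAt_comp_div (hψ1 _ (hxV T hT)) (hx T hT) (hg1 T hT) (hgne T hT)
  have hderiv : ∀ T ∈ U, deriv (fun t => ψ (x t) / g t) =ᶠ[𝓝 T]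
      fun t => deriv ψ (x t) * g t - ψ (x t) * deriv g t / g t ^ 2 := fun T hT =>
    eventually_of_mem (hU.mem_nhds hT) fun t ht => (hΦ' t ht).deriv
  have hΦ'' := fun T (hT : T ∈ U) => hasDerivAt_deriv_comp_div (hψ1 _ (hxV T hT))
    (hψ2 _ (hxV T hT)) (hx T hT) (hg1 T hT) (hg2 T hT) (hgne T hT)
  refine ⟨fun T hT => (hΦ' T hT).differentiableAt,
    fun T hT => (hΦ'' T hT).differentiableAt.congr_of_eventuallyEq (hderiv T hT), fun T hT => ?_⟩
  rw [(hderiv T hT).deriv_eq, (hΦ'' T hT).deriv, hψ3 _ (hxV T hT)]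
  field_simp [hgne T hT]
  ring

lemma schwarzian_of_sq_eq_deriv {U : Set ℂ} (hU : IsOpen U)
    (hg1 : ∀ T ∈ U, DifferentiableAt ℂ g T) (hg2 : ∀ T ∈ U, DifferentiableAt ℂ (deriv g) T)
    (hgsq : ∀ T ∈ U, g T ^ 2 = deriv x T)
    (hT : T ∈ U) :
    schwarzian x T = 2 * deriv (deriv g) T / g T - 4 * (deriv g T / g T) ^ 2 := by
  have hx' : deriv x =ᶠ[𝓝 T] fun t => g t ^ 2 :=
    eventually_of_mem (hU.mem_nhds hT) fun t ht => (hgsq t ht).symm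
  have hx'' : deriv (deriv x) =ᶠ[𝓝 T] fun t => 2 * g t * deriv g t := by
    filter_upwards [hx'.deriv, hU.mem_nhds hT] with t ht htU
    rw [ht, ((hg1 t htU).hasDerivAt.fun_pow 2).deriv]
    ring
  have hx''' : deriv (deriv (deriv x)) T = 2 * deriv g T ^ 2 + 2 * g T * deriv (deriv g) T := by
    rw [hx''.deriv_eq, (((hg1 T hT).hasDerivAt.const_mul 2).fun_mul (hg2 T hT).hasDerivAt).deriv]
    ring
  rw [schwarzian, hx''', hx''.eq_of_nhds, hx'.eq_of_nhds]
  field_simp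
  ring

theorem SolvesOn.liouville {U V : Set ℂ} (hU : IsOpen U) (hψ : SolvesOn Q ψ V)
    (hxV : ∀ T ∈ U, x T ∈ V) (hg1 : ∀ T ∈ U, DifferentiableAt ℂ g T)
    (hg2 : ∀ T ∈ U, DifferentiableAt ℂ (deriv g) T) (hgne : ∀ T ∈ U, g T ≠ 0)
    (hgsq : ∀ T ∈ U, g T ^ 2 = deriv x T) :
    SolvesOn (fun T => Q (x T) * deriv x T ^ 2 - schwarzian x T / 2)
      (fun T => ψ (x T) / g T) U :=
  (hψ.comp_div hU hxV hg1 hg2 hgne hgsq).congr_potential fun T hT => by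
    rw [← hgsq T hT, schwarzian_of_sq_eq_deriv hU hg1 hg2 hgsq hT]
    ring

end Liouville

section Example2

variable {T : ℂ}

lemma sq_add_add_one_ne_zero (h : T ^ 3 ≠ 1) : T ^ 2 + T + 1 ≠ 0 := fun h0 =>
  h (by linear_combination (T - 1) * h0)

lemma factors_ne_zero_of_pow_six_ne_one (h : T ^ 6 ≠ 1) :
    T - 1 ≠ 0 ∧ T + 1 ≠ 0 ∧ T ^ 2 + T + 1 ≠ 0 ∧ T ^ 2 - T + 1 ≠ 0 := by
  have h' : (T - 1) * (T + 1) * (T ^ 2 + T + 1) * (T ^ 2 - T + 1) ≠ 0 := fun h0 =>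
    h (by linear_combination h0)
  simp only [mul_ne_zero_iff] at h'
  tauto

noncomputable def xOfT' (T : ℂ) : ℂ := 6 * (1 - T ^ 2) / (T ^ 2 + T + 1) ^ 2

noncomputable def xOfT'' (T : ℂ) : ℂ := 12 * (T ^ 3 - 3 * T - 1) / (T ^ 2 + T + 1) ^ 3

noncomputable def xOfT''' (T : ℂ) : ℂ := 36 * (4 * T + 6 * T ^ 2 - T ^ 4) / (T ^ 2 + T + 1) ^ 4

lemma hasDerivAt_sq_add_add_one :
    HasDerivAt (fun t : ℂ => t ^ 2 + t + 1) (2 * T + 1) T := by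
  simpa using ((hasDerivAt_pow 2 T).add (hasDerivAt_id T)).add_const 1

lemma hasDerivAt_xOfT (h : T ^ 3 ≠ 1) : HasDerivAt xOfT (xOfT' T) T := by
  have hd : (1 : ℂ) - T ^ 3 ≠ 0 := sub_ne_zero.mpr (Ne.symm h)
  have hq := sq_add_add_one_ne_zero h
  refine (((((hasDerivAt_id' T).sub_const 1).fun_pow 3).const_mul 2).div
    ((hasDerivAt_pow 3 T).const_sub 1) hd).congr_deriv ?_
  rw [xOfT', div_eq_div_iff (pow_ne_zero 2 hd) (pow_ne_zero 2 hq)]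
  ring

lemma hasDerivAt_xOfT' (hq : T ^ 2 + T + 1 ≠ 0) : HasDerivAt xOfT' (xOfT'' T) T := by
  refine ((((hasDerivAt_pow 2 T).const_sub 1).const_mul 6).div
    (hasDerivAt_sq_add_add_one.fun_pow 2) (pow_ne_zero 2 hq)).congr_deriv ?_
  rw [xOfT'', div_eq_div_iff (pow_ne_zero 2 (pow_ne_zero 2 hq)) (pow_ne_zero 3 hq)]
  ring

lemma hasDerivAt_xOfT'' (hq : T ^ 2 + T + 1 ≠ 0) : HasDerivAt xOfT'' (xOfT''' T) T := by
  have hn :=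
    (((hasDerivAt_pow 3 T).fun_sub ((hasDerivAt_id' T).const_mul 3)).sub_const 1).const_mul 12
  refine (hn.div (hasDerivAt_sq_add_add_one.fun_pow 3) (pow_ne_zero 3 hq)).congr_deriv ?_
  rw [xOfT''', div_eq_div_iff (pow_ne_zero 2 (pow_ne_zero 3 hq)) (pow_ne_zero 4 hq)]
  ring

lemma eventually_pow_three_ne_one (h : T ^ 3 ≠ 1) : ∀ᶠ t in 𝓝 T, t ^ 3 ≠ 1 :=
  (continuous_pow 3).continuousAt.eventually_ne h

lemma deriv_xOfT_eventuallyEq (h : T ^ 3 ≠ 1) : deriv xOfT =ᶠ[𝓝 T] xOfT' :=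
  (eventually_pow_three_ne_one h).mono fun _ ht => (hasDerivAt_xOfT ht).deriv

lemma deriv_deriv_xOfT_eventuallyEq (h : T ^ 3 ≠ 1) : deriv (deriv xOfT) =ᶠ[𝓝 T] xOfT'' :=
  (deriv_xOfT_eventuallyEq h).deriv.trans <| (eventually_pow_three_ne_one h).mono fun _ ht =>
    (hasDerivAt_xOfT' (sq_add_add_one_ne_zero ht)).deriv

lemma schwarzian_xOfT (h : T ^ 3 ≠ 1) :
    schwarzian xOfT T = xOfT''' T / xOfT' T - 3 / 2 * (xOfT'' T / xOfT' T) ^ 2 := by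
  rw [schwarzian, (deriv_deriv_xOfT_eventuallyEq h).deriv_eq,
    (hasDerivAt_xOfT'' (sq_add_add_one_ne_zero h)).deriv,
    (deriv_deriv_xOfT_eventuallyEq h).eq_of_nhds, (deriv_xOfT_eventuallyEq h).eq_of_nhds]

lemma Q₃_div (a q : ℂ) (hq : q ≠ 0) :
    Q₃ (a / q) = -(1 / 4) * q ^ 2 *
      (a ^ 4 + 8 * a ^ 3 * q + 72 * a ^ 2 * q ^ 2 - 64 * a * q ^ 3 + 64 * q ^ 4) /
        (a ^ 2 * (a - q) ^ 2 * (a + 8 * q) ^ 2) := by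
  rw [Q₃, div_sub_one hq, div_add' _ _ _ hq]
  field_simp

lemma liouville_potential_xOfT (h : T ^ 6 ≠ 1) :
    Q₃ (xOfT T) * deriv xOfT T ^ 2 - schwarzian xOfT T / 2 = -9 * T ^ 4 / (T ^ 6 - 1) ^ 2 := by
  have h3 : T ^ 3 ≠ 1 := fun h3 => h (by linear_combination (T ^ 3 + 1) * h3)
  obtain ⟨hm, hp, hq, hr⟩ := factors_ne_zero_of_pow_six_ne_one h
  have hx : xOfT T = -2 * (T - 1) ^ 2 / (T ^ 2 + T + 1) := by
    rw [xOfT, div_eq_div_iff (sub_ne_zero.mpr (Ne.symm h3)) hq]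
    ring
  have h1 : (1 : ℂ) - T ^ 2 ≠ 0 := fun h0 => mul_ne_zero hm hp (by linear_combination -h0)
  have h6 : T ^ 6 - 1 ≠ 0 := sub_ne_zero.mpr h
  -- `field_simp` rewrites the quadratic factors into these forms
  have hq' : T * (T + 1) + 1 ≠ 0 := by convert hq using 1; ring
  have hr' : T * (T - 1) + 1 ≠ 0 := by convert hr using 1; ring
  rw [(hasDerivAt_xOfT h3).deriv, schwarzian_xOfT h3, xOfT', xOfT'', xOfT''', hx,
    Q₃_div _ _ hq, show -2 * (T - 1) ^ 2 - (T ^ 2 + T + 1) = -3 * (T ^ 2 - T + 1) by ring,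
    show -2 * (T - 1) ^ 2 + 8 * (T ^ 2 + T + 1) = 6 * (T + 1) ^ 2 by ring]
  field_simp
  ring

end Example2

theorem chudnovsky_three_example2_general
    (U V : Set ℂ) (hU : IsOpen U)
    (hT2 : ∀ T ∈ U, T ^ 6 ≠ 1)
    (hxV : ∀ T ∈ U, xOfT T ∈ V)
    (ψ g : ℂ → ℂ)
    (hψ : SolvesOn Q₃ ψ V)
    (hg1 : ∀ T ∈ U, DifferentiableAt ℂ g T)
    (hg2 : ∀ T ∈ U, DifferentiableAt ℂ (deriv g) T)
    (hgne : ∀ T ∈ U, g T ≠ 0)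
    (hgsq : ∀ T ∈ U, g T ^ 2 = deriv xOfT T) :
    SolvesOn (fun T => -9 * T ^ 4 / (T ^ 6 - 1) ^ 2)
      (fun T => ψ (xOfT T) / g T) U :=
  (hψ.liouville hU hxV hg1 hg2 hgne hgsq).congr_potential fun T hT =>
    liouville_potential_xOfT (hT2 T hT)

theorem chudnovsky_three_example2
    (U V : Set ℂ) (hU : IsOpen U) (hV : IsOpen V)
    (hT1 : ∀ T ∈ U, T ^ 3 ≠ 1)
    (hT2 : ∀ T ∈ U, T ^ 6 ≠ 1)
    (hxne : ∀ T ∈ U, xOfT T * (xOfT T - 1) * (xOfT T + 8) ≠ 0)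
    (hxV : ∀ T ∈ U, xOfT T ∈ V)
    (ψ g : ℂ → ℂ)
    (hψ : SolvesOn Q₃ ψ V)
    (hg1 : ∀ T ∈ U, DifferentiableAt ℂ g T)
    (hg2 : ∀ T ∈ U, DifferentiableAt ℂ (deriv g) T)
    (hgne : ∀ T ∈ U, g T ≠ 0)
    (hgsq : ∀ T ∈ U, g T ^ 2 = deriv xOfT T) :
    SolvesOn (fun T => -9 * T ^ 4 / (T ^ 6 - 1) ^ 2)
      (fun T => ψ (xOfT T) / g T) U :=
  chudnovsky_three_example2_general U V hU hT2 hxV ψ g hψ hg1 hg2 hgne hgsq
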